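/- For every integer n ≥ 4, the graph K_n − e is not a TS_k-reconfiguration graph for any k ≥ 2. -/

import Mathlib

open SimpleGraph

/-- `I` is an independent (stable) set of `G`. -/
def IsIndep {V : Type*} (G : SimpleGraph V) (I : Finset V) : Prop :=
  ∀ u ∈ I, ∀ v ∈ I, ¬ G.Adj u v

/-- Vertices of the `TS_k`-reconfiguration graph: size-`k` independent sets of `G`. -/
abbrev TSVert {V : Type*} (G : SimpleGraph V) (k : ℕ) := {I : Finset V // I.card = k ∧ IsIndep G I}

/-- The `TS_k`-reconfiguration graph of `G`: size-`k` independent sets, adjacent iff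
`I \ J = {u}`, `J \ I = {v}` and `uv ∈ E(G)`. -/
def TSk {V : Type*} [DecidableEq V] (G : SimpleGraph V) (k : ℕ) : SimpleGraph (TSVert G k) :=
  SimpleGraph.fromRel (fun I J =>
    ∃ u v, (I : Finset V) \ (J : Finset V) = {u} ∧
      (J : Finset V) \ (I : Finset V) = {v} ∧ G.Adj u v)

/-- `K_n − e`: the complete graph on `n` vertices with one edge removed. -/
def KnMinusE (n : ℕ) (h : 4 ≤ n) : SimpleGraph (Fin n) :=
  (⊤ : SimpleGraph (Fin n)).deleteEdges {s((⟨0, by omega⟩ : Fin n), (⟨1, by omega⟩ : Fin n))}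

/-! Pull back the vertices `0, 1, 2, 3` of `K_n − e` to independent sets `A, B, C, D`.
`C` and `D` differ by a slide `u → v` along an edge, so a common neighbour of them cannot keep
`u` (it would contain both `u` and `v`, or equal `C`); hence `A = K ∪ {a}` and `B = K ∪ {b}`
with `K = C \ {u}`, and `ab` is a non-edge because `A` and `B` are not adjacent. For `k ≥ 2`
pick `s ∈ K`: then `X = (K \ {s}) ∪ {a, b}` is an independent `k`-set other than `A` and `B`,
so it must be adjacent to `A`; but `A` and `X` differ by the slide `s → b`, and `s, b ∈ B`. -/

namespace Finset
variable {α : Type*} [DecidableEq α]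

theorem sdiff_eq_singleton_and_sdiff_eq_singleton_iff {s t : Finset α} {a b : α} :
    s \ t = {a} ∧ t \ s = {b} ↔ a ∈ s ∧ b ∉ s ∧ t = insert b (s.erase a) := by
  simp only [Finset.ext_iff, mem_sdiff, mem_singleton, mem_insert, mem_erase]
  grind

end Finset

section IsIndep
variable {V : Type*} {G : SimpleGraph V}

theorem IsIndep.mono {s t : Finset V} (ht : IsIndep G t) (hst : s ⊆ t) : IsIndep G s :=
  fun u hu v hv => ht u (hst hu) v (hst hv)

theorem isIndep_insert [DecidableEq V] {a : V} {s : Finset V} :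
    IsIndep G (insert a s) ↔ IsIndep G s ∧ ∀ x ∈ s, ¬ G.Adj a x := by
  simp only [IsIndep, Finset.forall_mem_insert, G.irrefl, not_false_eq_true, true_and]
  grind [SimpleGraph.Adj.symm]

end IsIndep

namespace TSk
variable {V : Type*} [DecidableEq V] {G : SimpleGraph V} {k : ℕ}

theorem adj_iff_sdiff {I J : TSVert G k} :
    (TSk G k).Adj I J ↔ ∃ u v, I.1 \ J.1 = {u} ∧ J.1 \ I.1 = {v} ∧ G.Adj u v := by
  rw [TSk, fromRel_adj]
  constructor
  · rintro ⟨-, h | ⟨v, u, h₂, h₁, huv⟩⟩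
    · exact h
    · exact ⟨u, v, h₁, h₂, huv.symm⟩
  · rintro ⟨u, v, h₁, h₂, huv⟩
    refine ⟨fun hIJ => ?_, .inl ⟨u, v, h₁, h₂, huv⟩⟩
    simp [hIJ] at h₁

theorem adj_iff {I J : TSVert G k} :
    (TSk G k).Adj I J ↔ ∃ u ∈ I.1, ∃ v ∉ I.1, G.Adj u v ∧ J.1 = insert v (I.1.erase u) := by
  simp only [adj_iff_sdiff, ← and_assoc, Finset.sdiff_eq_singleton_and_sdiff_eq_singleton_iff]
  aesop

theorem eq_insert_erase_of_adj_of_adj {A C D : TSVert G k} {u v : V} (hu : u ∈ C.1)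
    (hv : v ∉ C.1) (huv : G.Adj u v) (hD : D.1 = insert v (C.1.erase u))
    (hCA : (TSk G k).Adj C A) (hDA : (TSk G k).Adj D A) :
    ∃ a ∉ C.1, A.1 = insert a (C.1.erase u) := by
  obtain ⟨q, hq, p, hp, -, hA⟩ := adj_iff.1 hCA
  by_cases hqu : q = u
  · exact ⟨p, hp, hqu ▸ hA⟩
  have huA : u ∈ A.1 := by simp [hA, hu, Ne.symm hqu]
  obtain ⟨q', -, p', -, -, hA'⟩ := adj_iff.1 hDA
  by_cases hqv : q' = v
  · have hDv : D.1.erase v = C.1.erase u := by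
      rw [hD, Finset.erase_insert fun h => hv (Finset.mem_of_mem_erase h)]
    rw [hA', hqv, hDv] at huA
    have hp' : u = p' := by simpa using huA
    refine absurd (Subtype.ext ?_) hCA.ne
    rw [hA', hqv, hDv, ← hp', Finset.insert_erase hu]
  · have hvA : v ∈ A.1 := by simp [hA', hD, Ne.symm hqv]
    exact absurd huv (A.2.2 u huA v hvA)

theorem exists_ne_not_adj_of_eq_insert (hk : 2 ≤ k) {A B : TSVert G k} {K : Finset V} {a b : V}
    (ha : a ∉ K) (hb : b ∉ K) (hA : A.1 = insert a K) (hB : B.1 = insert b K)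
    (hAB : A ≠ B) (hnAB : ¬ (TSk G k).Adj A B) :
    ∃ X : TSVert G k, X ≠ A ∧ X ≠ B ∧ ¬ (TSk G k).Adj A X := by
  have hab : a ≠ b := by
    rintro rfl
    exact hAB (Subtype.ext (hA.trans hB.symm))
  have hbA : b ∉ A.1 := by simp [hA, hb, Ne.symm hab]
  have haB : a ∉ B.1 := by simp [hB, ha, hab]
  have hGab : ¬ G.Adj a b := fun h =>
    hnAB (adj_iff.2 ⟨a, by simp [hA], b, hbA, h, by rw [hB, hA, Finset.erase_insert ha]⟩)
  have hK : K.card + 1 = k := by rw [← Finset.card_insert_of_notMem ha, ← hA, A.2.1]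
  obtain ⟨s, hs⟩ : K.Nonempty := by rw [← Finset.card_pos]; omega
  have has : a ≠ s := fun h => ha (h ▸ hs)
  have hbs : b ∉ K.erase s := fun h => hb (Finset.mem_of_mem_erase h)
  set X := insert a (insert b (K.erase s)) with hX
  have hXcard : X.card = k := by
    rw [hX, Finset.card_insert_of_notMem (by simp [hab, ha]), Finset.card_insert_of_notMem hbs,
      Finset.card_erase_of_mem hs]
    omega
  have hXindep : IsIndep G X := by
    have hAi := A.2.2
    have hBi := B.2.2
    rw [hA, isIndep_insert] at hAi
    rw [hB, isIndep_insert] at hBi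
    rw [hX, isIndep_insert, isIndep_insert]
    refine ⟨⟨hAi.1.mono (Finset.erase_subset s K),
      fun x hx => hBi.2 x (Finset.mem_of_mem_erase hx)⟩, ?_⟩
    simpa [hGab] using fun x _ hx => hAi.2 x hx
  refine ⟨⟨X, hXcard, hXindep⟩, fun h => hbA ?_, fun h => haB ?_, fun hadj => ?_⟩
  · rw [← h]; simp [hX]
  · rw [← h]; simp [hX]
  have hAX : A.1 \ X = {s} ∧ X \ A.1 = {b} :=
    Finset.sdiff_eq_singleton_and_sdiff_eq_singleton_iff.2 ⟨by simp [hA, hs], hbA,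
      by rw [hX, hA, Finset.erase_insert_of_ne has, Finset.insert_comm]⟩
  obtain ⟨u, v, hu, hv, huv⟩ := adj_iff_sdiff.1 hadj
  rw [hAX.1, Finset.singleton_inj] at hu
  rw [hAX.2, Finset.singleton_inj] at hv
  subst hu hv
  exact B.2.2 s (by simp [hB, hs]) b (by simp [hB]) huv

theorem exists_ne_not_adj (hk : 2 ≤ k) {A B C D : TSVert G k} (hCD : (TSk G k).Adj C D)
    (hCA : (TSk G k).Adj C A) (hDA : (TSk G k).Adj D A)
    (hCB : (TSk G k).Adj C B) (hDB : (TSk G k).Adj D B)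
    (hAB : A ≠ B) (hnAB : ¬ (TSk G k).Adj A B) :
    ∃ X : TSVert G k, X ≠ A ∧ X ≠ B ∧ ¬ (TSk G k).Adj A X := by
  obtain ⟨u, hu, v, hv, huv, hD⟩ := adj_iff.1 hCD
  obtain ⟨a, ha, hA⟩ := eq_insert_erase_of_adj_of_adj hu hv huv hD hCA hDA
  obtain ⟨b, hb, hB⟩ := eq_insert_erase_of_adj_of_adj hu hv huv hD hCB hDB
  exact exists_ne_not_adj_of_eq_insert hk (fun h => ha (Finset.mem_of_mem_erase h))
    (fun h => hb (Finset.mem_of_mem_erase h)) hA hB hAB hnAB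

end TSk

theorem KnMinusE_adj_iff {n : ℕ} (hn : 4 ≤ n) {x y : Fin n} :
    (KnMinusE n hn).Adj x y ↔ x.val ≠ y.val ∧ (2 ≤ x.val ∨ 2 ≤ y.val) := by
  simp only [KnMinusE, deleteEdges_adj, top_adj, Set.mem_singleton_iff, Sym2.eq_iff, ne_eq,
    Fin.ext_iff]
  omega

/-- For every `n ≥ 4`, the graph `K_n − e` is not a `TS_k`-reconfiguration graph for any
`k ≥ 2`. -/
theorem stmt12 (n : ℕ) (hn : 4 ≤ n) (k : ℕ) (hk : 2 ≤ k) :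
    ¬ ∃ (W : Type) (_ : Fintype W) (dW : DecidableEq W) (G : SimpleGraph W),
      Nonempty ((@TSk W dW G k) ≃g KnMinusE n hn) := by
  rintro ⟨W, _, _, G, ⟨e⟩⟩
  have adj (x y : Fin n) (hxy : x.val ≠ y.val) (h2 : 2 ≤ x.val ∨ 2 ≤ y.val) :
      (TSk G k).Adj (e.symm x) (e.symm y) :=
    e.symm.map_adj_iff.2 ((KnMinusE_adj_iff hn).2 ⟨hxy, h2⟩)
  obtain ⟨X, hX0, hX1, hnadj⟩ := TSk.exists_ne_not_adj hk
    (adj ⟨2, by omega⟩ ⟨3, by omega⟩ (by simp) (by simp))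
    (adj ⟨2, by omega⟩ ⟨0, by omega⟩ (by simp) (by simp))
    (adj ⟨3, by omega⟩ ⟨0, by omega⟩ (by simp) (by simp))
    (adj ⟨2, by omega⟩ ⟨1, by omega⟩ (by simp) (by simp))
    (adj ⟨3, by omega⟩ ⟨1, by omega⟩ (by simp) (by simp))
    (fun h => by simpa using e.symm.injective h)
    (fun h => by simpa using (KnMinusE_adj_iff hn).1 (e.symm.map_adj_iff.1 h))
  have hX (i : Fin n) (hi : X ≠ e.symm i) : (e X).val ≠ i.val :=
    fun h => hi (by rw [← Fin.ext h, e.symm_apply_apply])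
  have h0 : (e X).val ≠ 0 := hX _ hX0
  have h1 : (e X).val ≠ 1 := hX _ hX1
  exact hnadj (e.symm_apply_apply X ▸ adj ⟨0, by omega⟩ (e X) (Ne.symm h0) (by omega))
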